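/- arXiv:1604.02711 — 2 statements merged into one kernel-verified Lean document; each statement's English description precedes it below -/
import Mathlib

section
/- Deleting an edge from a flow graph cannot violate the parent property of the dominator tree: if G' is obtained from G by deleting an edge, then for every edge (v, w) of G' with v reachable from s in G', v is a descendant of d(w) in the dominator tree D of G, where d(w) is the parent of w in D. -/
variable {V : Type*}

/-- `p` is a path (walk) in the digraph `E` from `a` to `b`, given as its list of vertices. -/
def IsPath (E : V → V → Prop) (a b : V) (p : List V) : Prop :=
  p.Chain' E ∧ p.head? = some a ∧ p.getLast? = some b

/-- `v` is reachable from `s` in the digraph `E`. -/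
def Reach (E : V → V → Prop) (s v : V) : Prop := ∃ p, IsPath E s v p

/-- `w` dominates `v` in the flow graph `(E, s)`. -/
def Dom (E : V → V → Prop) (s w v : V) : Prop :=
  Reach E s v ∧ ∀ p, IsPath E s v p → w ∈ p

/-- `dv` is the immediate dominator of `v`: `dv ≠ v`, `dv` dominates `v`, and every
proper dominator of `v` dominates `dv`. -/
def IsIdom (E : V → V → Prop) (s dv v : V) : Prop :=
  dv ≠ v ∧ Dom E s dv v ∧ ∀ u, Dom E s u v → u ≠ v → Dom E s u dv

/-- `u` is an ancestor of `w` in the tree given by parent function `parent` (reflexive). -/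
def Anc (parent : V → V) (u w : V) : Prop := ∃ k, parent^[k] w = u

/-- The tree with parent function `t` has the parent property for flow graph `(E, s)`. -/
def ParentProp (E : V → V → Prop) (s : V) (t : V → V) : Prop :=
  ∀ v w, E v w → Reach E s v → Anc t (t w) v

/-- The tree with parent function `t` has the sibling property for flow graph `(E, s)`. -/
def SiblingProp (E : V → V → Prop) (s : V) (t : V → V) : Prop :=
  ∀ v w, Reach E s v → Reach E s w → v ≠ s → w ≠ s → t v = t w → v ≠ w → ¬ Dom E s v w

/-- `t` is (the parent function of) a tree rooted at `s` on the reachable vertices. -/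
def IsRootedTree (E : V → V → Prop) (s : V) (t : V → V) : Prop :=
  t s = s ∧ ∀ v, Reach E s v → (v ≠ s → Reach E s (t v)) ∧ ∃ k, t^[k] v = s

/-! The edge `(v, w)` of `G'` is an edge of `G` whose tail is reachable in `G`, so it is enough
to have the parent property of `D` in `G`. Every path to `v` extends along `(v, w)` to a path to
`w`, which meets `d w` before `w`; hence `d w` dominates `v`. Finally every dominator of `v` is an
ancestor of `v` in `D`: `d v` occurs on each path to `v`, and the prefix ending at `d v` is a
strictly shorter path, so induction on the length of a path applies. -/

section

variable {E : V → V → Prop} {s u v w : V} {p : List V}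

lemma IsPath.ne_nil (hp : IsPath E s v p) : p ≠ [] := by
  rintro rfl
  simp [IsPath] at hp

lemma IsPath.mono {E' : V → V → Prop} (hE : ∀ x y, E' x y → E x y) (hp : IsPath E' s v p) :
    IsPath E s v p :=
  ⟨hp.1.imp fun x y => hE x y, hp.2⟩

lemma IsPath.concat (hp : IsPath E s v p) (hvw : E v w) : IsPath E s w (p ++ [w]) := by
  refine ⟨List.isChain_append.mpr ⟨hp.1, List.isChain_singleton w, ?_⟩, ?_, List.getLast?_concat⟩
  · intro x hx y hy
    rw [hp.2.2, Option.mem_some_iff] at hx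
    rw [List.head?_singleton, Option.mem_some_iff] at hy
    exact hx ▸ hy ▸ hvw
  · rw [List.head?_append_of_ne_nil _ hp.ne_nil]
    exact hp.2.1

lemma IsPath.exists_prefix (hp : IsPath E s v p) (hu : u ∈ p) :
    ∃ q, IsPath E s u q ∧ (u ≠ v → q.length < p.length) := by
  obtain ⟨l₁, l₂, rfl⟩ := List.append_of_mem hu
  refine ⟨l₁ ++ [u], ⟨hp.1.prefix ⟨l₂, by simp⟩, ?_, List.getLast?_concat⟩, ?_⟩
  · cases l₁ <;> simpa using hp.2.1
  · intro hne
    rcases eq_or_ne l₂ [] with rfl | hl₂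
    · exact absurd (by simpa using hp.2.2) hne
    · simpa [List.length_append] using List.length_pos_iff.mpr hl₂

lemma dom_start (hv : Reach E s v) : Dom E s s v := by
  refine ⟨hv, fun q hq => ?_⟩
  obtain ⟨x, l, rfl⟩ := List.exists_cons_of_ne_nil hq.ne_nil
  obtain rfl : x = s := by simpa using hq.2.1
  exact List.mem_cons_self

lemma eq_start_of_dom_start (h : Dom E s u s) : u = s := by
  have hs : IsPath E s s [s] := ⟨List.isChain_singleton s, rfl, rfl⟩
  simpa using h.2 [s] hs

lemma dom_of_isIdom_of_edge (hv : Reach E s v) (hvw : E v w) (hidom : IsIdom E s u w) :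
    Dom E s u v := by
  refine ⟨hv, fun q hq => ?_⟩
  rcases List.mem_append.mp (hidom.2.1.2 _ (hq.concat hvw)) with h | h
  · exact h
  · exact absurd (List.mem_singleton.mp h) hidom.1

lemma Anc.parent {t : V → V} (h : Anc t u w) : Anc t (t u) w := by
  obtain ⟨k, rfl⟩ := h
  exact ⟨k + 1, Function.iterate_succ_apply' t k w⟩

lemma anc_of_dom {d : V → V} (hd : ∀ u, Reach E s u → u ≠ s → IsIdom E s (d u) u)
    (h : Dom E s u v) : Anc d u v := by
  obtain ⟨p, hp⟩ := h.1
  induction hn : p.length using Nat.strong_induction_on generalizing v p with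
  | _ n ih =>
    rcases eq_or_ne u v with rfl | hne
    · exact ⟨0, rfl⟩
    have hvs : v ≠ s := by rintro rfl; exact hne (eq_start_of_dom_start h)
    have hidom := hd v h.1 hvs
    obtain ⟨q, hq, hlt⟩ := hp.exists_prefix (hidom.2.1.2 p hp)
    obtain ⟨k, hk⟩ := ih _ (hn ▸ hlt hidom.1) (hidom.2.2 u h hne) q hq rfl
    exact ⟨k + 1, by rw [Function.iterate_succ_apply, hk]⟩

end

/-- Deleting an edge cannot violate the parent property of the dominator tree:
for every edge `(v, w)` of `G' = G - (a, b)` with `v` reachable in `G'`,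
`v` is a descendant of `d w` in the dominator tree of `G`. -/
theorem deletion_preserves_parent_property (E : V → V → Prop) (s : V) (d : V → V)
    (hd : ∀ u, Reach E s u → u ≠ s → IsIdom E s (d u) u)
    (a b v w : V)
    (hvw : (fun p q => E p q ∧ ¬ (p = a ∧ q = b)) v w)
    (hv : Reach (fun p q => E p q ∧ ¬ (p = a ∧ q = b)) s v) :
    Anc d (d w) v := by
  obtain ⟨p, hp⟩ := hv
  have hpE : IsPath E s v p := hp.mono fun _ _ h => h.1
  have hvE : Reach E s v := ⟨p, hpE⟩
  rcases eq_or_ne w s with rfl | hws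
  · exact (anc_of_dom hd (dom_start hvE)).parent
  · have hwE : Reach E s w := ⟨_, hpE.concat hvw.1⟩
    exact anc_of_dom hd (dom_of_isIdom_of_edge hvE hvw.1 (hd w hwE hws))
end

section
/- Let G' be obtained from flow graph G by deleting edge (x, y), where x is reachable in G' and y remains reachable in G'. If a vertex v is affected (d'(v) ≠ d(v)), then d(v) = d(y) and there is a path P from y to v in G such that every vertex w on P satisfies depth(w) > depth(d(v)) in the dominator tree D of G. -/
variable {V : Type*}

/-!
Let `c = d v` and `u = d' v`. Since `c` still dominates `v` in `G'` and `u ≠ c`, `u` is a proper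
`G'`-dominator of `v` strictly below `c`, so `u` cannot dominate `v` in `G`: some `G`-path `P`
from `s` to `v` avoids `u`, and it must pass through `y`. Its part after the last visit to `y`
is a `G'`-path; it avoids `c` too (otherwise `u` would dominate `c` in `G'`), so `c` strictly
dominates every vertex on it, which gives the depth bound. Finally `u` and `d y` both dominate
`y` in `G'`, and `u` cannot lie above `d y` (the prefix of `P` up to `d y` avoids both `y` and
`u`), so `d y` dominates `u`, hence `v`, and therefore `d y = c`.
-/

def deleteEdge (E : V → V → Prop) (x y : V) : V → V → Prop :=
  fun p q => E p q ∧ ¬ (p = x ∧ q = y)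

theorem deleteEdge_le (E : V → V → Prop) (x y : V) : deleteEdge E x y ≤ E :=
  fun _ _ => And.left

section Paths

variable {E F : V → V → Prop} {a b c w : V} {p q : List V}

theorem isPath_singleton (E : V → V → Prop) (a : V) : IsPath E a a [a] :=
  ⟨List.isChain_singleton a, rfl, rfl⟩

theorem IsPath.getLast_mem (h : IsPath E a b p) : b ∈ p :=
  List.mem_of_getLast? h.2.2

theorem isPath_append_cons_iff :
    IsPath E a c (p ++ w :: q) ↔ IsPath E a w (p ++ [w]) ∧ IsPath E w c (w :: q) := by
  change List.IsChain E _ ∧ _ ↔ (List.IsChain E _ ∧ _) ∧ (List.IsChain E _ ∧ _)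
  rw [List.isChain_split]
  simp [List.head?_append, List.getLast?_append, and_assoc, and_left_comm]

theorem IsPath.append (h₁ : IsPath E a b p) (h₂ : IsPath E b c q) :
    IsPath E a c (p ++ q.tail) := by
  obtain ⟨p, rfl⟩ := List.getLast?_eq_some_iff.1 h₁.2.2
  obtain ⟨q, rfl⟩ := List.head?_eq_some_iff.1 h₂.2.1
  simpa using isPath_append_cons_iff.2 ⟨h₁, h₂⟩

theorem IsPath.mono_s11 (hFE : F ≤ E) (h : IsPath F a b p) : IsPath E a b p :=
  ⟨h.1.imp hFE, h.2⟩

theorem Reach.mono_s11 (hFE : F ≤ E) (h : Reach F a b) : Reach E a b :=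
  h.imp fun _ => IsPath.mono_s11 hFE

theorem IsPath.exists_suffix (h : IsPath E a b p) (hw : w ∈ p) :
    ∃ r, IsPath E w b (w :: r) ∧ w :: r ⊆ p ∧ w ∉ r := by
  obtain ⟨s, r, hp, hwr⟩ := List.eq_append_cons_of_mem (List.mem_reverse.2 hw)
  rw [List.reverse_eq_iff] at hp
  simp only [List.reverse_append, List.reverse_cons, List.append_assoc, List.singleton_append] at hp
  subst hp
  exact ⟨s.reverse, (isPath_append_cons_iff.1 h).2, List.subset_append_right _ _,
    by simpa using hwr⟩

theorem IsPath.deleteEdge_of_notMem_tail {x y : V} (h : IsPath E a b p) (hy : y ∉ p.tail) :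
    IsPath (deleteEdge E x y) a b p :=
  ⟨h.1.imp_of_mem_tail_imp fun _ _ _ hw hE => ⟨hE, fun hxy => hy (hxy.2 ▸ hw)⟩, h.2⟩

theorem IsPath.deleteEdge_of_notMem {x y : V} (h : IsPath E a b p) (hy : y ∉ p) :
    IsPath (deleteEdge E x y) a b p :=
  h.deleteEdge_of_notMem_tail (mt List.mem_of_mem_tail hy)

end Paths

section Dominators

variable {E F : V → V → Prop} {s a b c v w y : V} {p : List V}

theorem Dom.reach_left (h : Dom E s a b) : Reach E s a := by
  obtain ⟨p, hp⟩ := h.1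
  obtain ⟨q, r, rfl⟩ := List.append_of_mem (h.2 p hp)
  exact ⟨_, (isPath_append_cons_iff.1 hp).1⟩

theorem Dom.restrict (hFE : F ≤ E) (h : Dom E s a b) (hb : Reach F s b) : Dom F s a b :=
  ⟨hb, fun p hp => h.2 p (hp.mono_s11 hFE)⟩

theorem Dom.eq_of_dom_start (h : Dom E s a s) : a = s :=
  List.mem_singleton.1 (h.2 [s] (isPath_singleton E s))

theorem Dom.mem_of_mem_isPath (h : Dom E s a y) (hp : IsPath E s b p) (hy : y ∈ p) : a ∈ p := by
  obtain ⟨q, r, rfl⟩ := List.append_of_mem hy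
  have := h.2 _ (isPath_append_cons_iff.1 hp).1
  grind

theorem Dom.trans (hab : Dom E s a b) (hbc : Dom E s b c) : Dom E s a c :=
  ⟨hbc.1, fun p hp => hab.mem_of_mem_isPath hp (hbc.2 p hp)⟩

theorem Dom.exists_isPath_notMem (h : Dom E s w y) (hwy : w ≠ y) (hp : IsPath E s b p)
    (hyp : y ∈ p) : ∃ q, IsPath E s w q ∧ y ∉ q ∧ q ⊆ p := by
  obtain ⟨q, r, rfl, hyq⟩ := List.eq_append_cons_of_mem hyp
  have hqy := (isPath_append_cons_iff.1 hp).1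
  have hwq : w ∈ q := by simpa [hwy] using h.2 _ hqy
  obtain ⟨σ, τ, rfl⟩ := List.append_of_mem hwq
  exact ⟨σ ++ [w], (isPath_append_cons_iff.1 (by simpa using hqy)).1, by grind, by grind⟩

theorem Dom.antisymm (hab : Dom E s a b) (hba : Dom E s b a) : a = b := by
  by_contra hne
  obtain ⟨p, hp⟩ := hab.1
  obtain ⟨q, hq, hbq, -⟩ := hab.exists_isPath_notMem hne hp hp.getLast_mem
  exact hbq (hba.2 q hq)

theorem Dom.of_mem_isPath (h : Dom E s c v) (ha : Reach E s a) (hp : IsPath E a v p)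
    (hc : c ∉ p) (hw : w ∈ p) : Dom E s c w := by
  obtain ⟨q, r, rfl⟩ := List.append_of_mem hw
  obtain ⟨hqw, hwr⟩ := isPath_append_cons_iff.1 hp
  obtain ⟨p₀, hp₀⟩ := ha
  refine ⟨⟨_, hp₀.append hqw⟩, fun p' hp' => ?_⟩
  have := h.2 _ (hp'.append hwr)
  grind

theorem Dom.total (ha : Dom E s a v) (hb : Dom E s b v) : Dom E s a b ∨ Dom E s b a := by
  rcases eq_or_ne a b with rfl | hab
  · exact Or.inl ⟨ha.reach_left, fun _ hp => hp.getLast_mem⟩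
  obtain ⟨r, hr⟩ := ha.1
  obtain ⟨r, har, -, hra⟩ := hr.exists_suffix (ha.2 r hr)
  by_cases hbr : b ∈ a :: r
  · obtain ⟨σ, τ, rfl⟩ := List.append_of_mem ((List.mem_cons.1 hbr).resolve_left hab.symm)
    have hbτ := ((isPath_append_cons_iff (p := a :: σ)).1 har).2
    exact Or.inl (ha.of_mem_isPath hb.reach_left hbτ (by grind) List.mem_cons_self)
  · exact Or.inr (hb.of_mem_isPath ha.reach_left har hbr List.mem_cons_self)

theorem depth_lt_of_dom {d : V → V} {depth : V → ℕ}
    (hd : ∀ u, Reach E s u → u ≠ s → IsIdom E s (d u) u)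
    (hdepth : ∀ u, Reach E s u → u ≠ s → depth u = depth (d u) + 1)
    (h : Dom E s c w) (hcw : c ≠ w) : depth c < depth w := by
  induction hn : depth w using Nat.strong_induction_on generalizing w with
  | _ n ih =>
  have hws : w ≠ s := fun hws => hcw ((hws ▸ h).eq_of_dom_start.trans hws.symm)
  have hdw := hdepth w h.1 hws
  by_cases hcd : c = d w
  · subst hcd
    omega
  · have := ih _ (by omega) ((hd w h.1 hws).2.2 c h hcw) hcd rfl
    omega

end Dominators

section DeleteEdge

variable {E F : V → V → Prop} {s x y a c u v : V} {P : List V}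

theorem not_dom_of_isIdom_ne (hFE : F ≤ E) (hc : IsIdom E s c v) (hu : IsIdom F s u v)
    (huc : u ≠ c) (hv : Reach F s v) : ¬ Dom E s u v := fun h => by
  have hcv : Dom F s c v := hc.2.1.restrict hFE hv
  exact huc (((hc.2.2 u h hu.1).restrict hFE hcv.reach_left).antisymm (hu.2.2 c hcv hc.1))

theorem Dom.of_dom_deleteEdge (ha : Dom E s a y) (h : Dom (deleteEdge E x y) s a v)
    (hv : Reach E s v) : Dom E s a v :=
  ⟨hv, fun p hp => by
    by_cases hyp : y ∈ p
    · exact ha.mem_of_mem_isPath hp hyp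
    · exact h.2 p (hp.deleteEdge_of_notMem hyp)⟩

theorem exists_isPath_mem_notMem_of_isIdom_ne (hc : IsIdom E s c v)
    (hu : IsIdom (deleteEdge E x y) s u v) (huc : u ≠ c) (hv : Reach (deleteEdge E x y) s v) :
    ∃ P, IsPath E s v P ∧ y ∈ P ∧ u ∉ P := by
  obtain ⟨P, hP, huP⟩ : ∃ P, IsPath E s v P ∧ u ∉ P := by
    by_contra! h
    exact not_dom_of_isIdom_ne (deleteEdge_le E x y) hc hu huc hv
      ⟨hv.mono_s11 (deleteEdge_le E x y), h⟩
  refine ⟨P, hP, ?_, huP⟩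
  by_contra hyP
  exact huP (hu.2.1.2 P (hP.deleteEdge_of_notMem hyP))

theorem IsIdom.eq_of_isPath_deleteEdge (hc : IsIdom E s c v) (ha : IsIdom E s a y)
    (hcy : Dom E s c y) (hcy_ne : c ≠ y) (hP : IsPath E s v P) (hyP : y ∈ P) (huP : u ∉ P)
    (huv : Dom (deleteEdge E x y) s u v) (huy : Dom (deleteEdge E x y) s u y) : c = a := by
  -- `P` reaches each strict dominator of `y` along a `y`-free, hence undeleted, prefix missing `u`.
  have hnot : ∀ w, Dom E s w y → w ≠ y → ¬ Dom (deleteEdge E x y) s u w := by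
    intro w hw hwy hu
    obtain ⟨q, hq, hyq, hqP⟩ := hw.exists_isPath_notMem hwy hP hyP
    exact huP (hqP (hu.2 q (hq.deleteEdge_of_notMem hyq)))
  have hav : Dom (deleteEdge E x y) s a v := by
    rcases (ha.2.1.restrict (deleteEdge_le E x y) huy.1).total huy with h | h
    · exact h.trans huv
    · exact absurd h (hnot a ha.2.1 ha.1)
  have hav_ne : a ≠ v := by
    rintro rfl
    exact hnot a ha.2.1 ha.1 huv
  exact (ha.2.2 c hcy hcy_ne).antisymm (hc.2.2 a (ha.2.1.of_dom_deleteEdge hav hc.2.1.1) hav_ne)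

end DeleteEdge

theorem deletion_affected_reachable_general (E : V → V → Prop) (s x y : V)
    (d d' : V → V) (depth : V → ℕ)
    (hd : ∀ u, Reach E s u → u ≠ s → IsIdom E s (d u) u)
    (hd' : ∀ u, Reach (fun p q => E p q ∧ ¬ (p = x ∧ q = y)) s u → u ≠ s →
      IsIdom (fun p q => E p q ∧ ¬ (p = x ∧ q = y)) s (d' u) u)
    (hdepth : ∀ u, Reach E s u → u ≠ s → depth u = depth (d u) + 1)
    (hy : Reach (fun p q => E p q ∧ ¬ (p = x ∧ q = y)) s y)
    (v : V) (hv : Reach (fun p q => E p q ∧ ¬ (p = x ∧ q = y)) s v) (hvs : v ≠ s)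
    (haff : d' v ≠ d v) :
    d v = d y ∧ ∃ p, IsPath E y v p ∧ ∀ w ∈ p, depth (d v) < depth w := by
  have hle := deleteEdge_le E x y
  have hc := hd v (hv.mono_s11 hle) hvs
  have hu : IsIdom (deleteEdge E x y) s (d' v) v := hd' v hv hvs
  obtain ⟨P, hP, hyP, huP⟩ := exists_isPath_mem_notMem_of_isIdom_ne hc hu haff hv
  obtain ⟨R, hR, hRP, hyR⟩ := hP.exists_suffix hyP
  have hR' := hR.deleteEdge_of_notMem_tail (x := x) hyR
  have huR : d' v ∉ y :: R := fun h => huP (hRP h)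
  have hcR : d v ∉ y :: R := fun h => haff
    ((hu.2.1.of_mem_isPath hy hR' huR h).antisymm (hu.2.2 _ (hc.2.1.restrict hle hv) hc.1))
  have hdom : ∀ w ∈ y :: R, Dom E s (d v) w :=
    fun w => hc.2.1.of_mem_isPath (hy.mono_s11 hle) hR hcR
  have hcy := hdom y List.mem_cons_self
  have hcy_ne : d v ≠ y := fun h => hcR (h ▸ List.mem_cons_self)
  have hys : y ≠ s := fun h => hcy_ne ((h ▸ hcy).eq_of_dom_start.trans h.symm)
  refine ⟨hc.eq_of_isPath_deleteEdge (hd y (hy.mono_s11 hle) hys) hcy hcy_ne hP hyP huP hu.2.1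
    (hu.2.1.of_mem_isPath hy hR' huR List.mem_cons_self), y :: R, hR, fun w hw => ?_⟩
  exact depth_lt_of_dom hd hdepth (hdom w hw) (ne_of_mem_of_not_mem hw hcR).symm

/-- After deleting edge `(x, y)`, with `x` reachable and `y` still reachable in `G'`,
every affected vertex `v` satisfies `d v = d y` and admits a path from `y` to `v` in `G`
all of whose vertices have depth greater than `depth (d v)` in the dominator tree of `G`. -/
theorem deletion_affected_reachable (E : V → V → Prop) (s x y : V)
    (d d' : V → V) (depth : V → ℕ)
    (hd : ∀ u, Reach E s u → u ≠ s → IsIdom E s (d u) u)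
    (hd' : ∀ u, Reach (fun p q => E p q ∧ ¬ (p = x ∧ q = y)) s u → u ≠ s →
      IsIdom (fun p q => E p q ∧ ¬ (p = x ∧ q = y)) s (d' u) u)
    (hdepth0 : depth s = 0)
    (hdepth : ∀ u, Reach E s u → u ≠ s → depth u = depth (d u) + 1)
    (hx : Reach (fun p q => E p q ∧ ¬ (p = x ∧ q = y)) s x)
    (hy : Reach (fun p q => E p q ∧ ¬ (p = x ∧ q = y)) s y)
    (v : V) (hv : Reach (fun p q => E p q ∧ ¬ (p = x ∧ q = y)) s v) (hvs : v ≠ s)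
    (haff : d' v ≠ d v) :
    d v = d y ∧ ∃ p, IsPath E y v p ∧ ∀ w ∈ p, depth (d v) < depth w :=
  deletion_affected_reachable_general E s x y d d' depth hd hd' hdepth hy v hv hvs haff
end
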